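/- Fix μ ∈ ℝ and σ > 0, and let P be the probability measure on ℝ³ with density f₃ with respect to Lebesgue measure. Then the pushforward of P under the map x ↦ x/‖x‖ (defined P-almost everywhere since P({0}) = 0) is the uniform probability measure on the unit sphere of ℝ³, i.e. the normalized surface measure on {x ∈ ℝ³ : ‖x‖ = 1}. -/

import Mathlib

open Real MeasureTheory Classical

/-- The Spherical Log-Normal density on ℝ³ with parameters `μ` and `σ`. -/
noncomputable def sphericalLogNormalDensity (μ σ : ℝ) (x : EuclideanSpace ℝ (Fin 3)) : ℝ :=
  if x = 0 then 0
  else (1 / (2 * (2 * π) ^ ((3 : ℝ) / 2) * σ * ‖x‖ ^ 3)) *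
    Real.exp (-(Real.log ‖x‖ - μ) ^ 2 / (2 * σ ^ 2))

/-- The uniform probability measure on the unit sphere of ℝ³: the surface
(spherical) measure on `{x : ‖x‖ = 1}`, normalized to total mass 1. -/
noncomputable def uniformSphereMeasure :
    Measure (Metric.sphere (0 : EuclideanSpace ℝ (Fin 3)) 1) :=
  ((volume : Measure (EuclideanSpace ℝ (Fin 3))).toSphere Set.univ)⁻¹ •
    (volume : Measure (EuclideanSpace ℝ (Fin 3))).toSphere

/-! Polar coordinates `x = r • u` split Lebesgue measure on `E ∖ {0}` into the product of the
surface measure `toSphere` and `r ^ (n - 1) dr`. A density depending only on `‖x‖` therefore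
pushes forward under `x ↦ ‖x‖⁻¹ • x` to a multiple of the surface measure, the factor being the
radial integral of the density. For the spherical log-normal density the substitution `r = exp t`
turns `r ^ 2 ρ(r) dr` into `(4π)⁻¹` times the Gaussian density of `N(μ, σ²)`, so the factor is
`(4π)⁻¹`, the reciprocal of the area of the unit sphere. -/

open Set Metric ProbabilityTheory
open scoped ENNReal

namespace MeasureTheory

section Polar

variable {E : Type*} [NormedAddCommGroup E] [NormedSpace ℝ E] [FiniteDimensional ℝ E]
  [MeasurableSpace E] [BorelSpace E] [Nontrivial E] (μ : Measure E) [μ.IsAddHaarMeasure]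

theorem lintegral_eq_lintegral_toSphere_prod (F : E → ℝ≥0∞) :
    ∫⁻ x, F x ∂μ = ∫⁻ p, F (p.2.1 • p.1.1)
      ∂(μ.toSphere.prod (Measure.volumeIoiPow (Module.finrank ℝ E - 1))) := by
  let Φ := homeomorphUnitSphereProd E
  calc ∫⁻ x, F x ∂μ = ∫⁻ x : ({0}ᶜ : Set E), F (Φ.symm (Φ x)) ∂μ.comap Subtype.val := by
        simp only [Homeomorph.symm_apply_apply]
        rw [lintegral_subtype_comap (measurableSet_singleton _).compl,
          restrict_compl_singleton]
    _ = _ := μ.measurePreserving_homeomorphUnitSphereProd.lintegral_comp_emb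
        Φ.measurableEmbedding (fun p => F (Φ.symm p))

theorem map_normalize_withDensity_norm {g : ℝ → ℝ≥0∞} (hg : Measurable g) :
    (μ.withDensity fun x => g ‖x‖).map (fun x => ‖x‖⁻¹ • x) =
      (∫⁻ r, g r ∂Measure.volumeIoiPow (Module.finrank ℝ E - 1)) • μ.toSphere.map Subtype.val := by
  have hN : Measurable fun x : E => ‖x‖⁻¹ • x := measurable_norm.inv.smul measurable_id
  ext s hs
  have hpolar (p : sphere (0 : E) 1 × Ioi (0 : ℝ)) :
      (((fun x : E => ‖x‖⁻¹ • x) ⁻¹' s).indicator (fun x => g ‖x‖) (p.2.1 • p.1.1)) =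
        (Subtype.val ⁻¹' s).indicator 1 p.1 * g p.2 := by
    obtain ⟨⟨u, hu⟩, ⟨r, hr⟩⟩ := p
    have hu' : ‖u‖ = 1 := by simpa using hu
    have hr' : (0 : ℝ) < r := hr
    simp [indicator, norm_smul, hu', abs_of_pos hr', smul_smul, hr'.ne']
  rw [Measure.map_apply hN hs, withDensity_apply _ (hN hs), Measure.smul_apply,
    Measure.map_apply measurable_subtype_coe hs, ← lintegral_indicator (hN hs),
    lintegral_eq_lintegral_toSphere_prod, smul_eq_mul, mul_comm, lintegral_congr hpolar,
    lintegral_prod_mul ((measurable_one.indicator (measurable_subtype_coe hs)).aemeasurable)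
      (hg.comp measurable_subtype_coe).aemeasurable (g := fun r : Ioi (0 : ℝ) => g r),
      lintegral_indicator_one (measurable_subtype_coe hs)]

end Polar

theorem Measure.lintegral_volumeIoiPow (n : ℕ) {g : ℝ → ℝ≥0∞} (hg : Measurable g) :
    ∫⁻ r, g r ∂Measure.volumeIoiPow n = ∫⁻ r in Ioi 0, ENNReal.ofReal (r ^ n) * g r := by
  rw [Measure.volumeIoiPow, lintegral_withDensity_eq_lintegral_mul _
      (measurable_subtype_coe.pow_const n).ennreal_ofReal
      (g := fun r : Ioi (0 : ℝ) => g r) (hg.comp measurable_subtype_coe),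
    ← lintegral_subtype_comap measurableSet_Ioi]
  rfl

end MeasureTheory

theorem lintegral_Ioi_zero_eq_lintegral_comp_exp (g : ℝ → ℝ≥0∞) :
    ∫⁻ r in Ioi 0, g r = ∫⁻ t, ENNReal.ofReal (exp t) * g (exp t) := by
  rw [← range_exp, ← image_univ, lintegral_image_eq_lintegral_abs_deriv_mul MeasurableSet.univ
    (fun t _ => (hasDerivAt_exp t).hasDerivWithinAt) exp_injective.injOn, Measure.restrict_univ]
  simp only [abs_of_pos (exp_pos _)]

noncomputable def sphericalLogNormalRadial (μ σ r : ℝ) : ℝ :=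
  (1 / (2 * (2 * π) ^ ((3 : ℝ) / 2) * σ * r ^ 3)) * exp (-(log r - μ) ^ 2 / (2 * σ ^ 2))

theorem measurable_sphericalLogNormalRadial (μ σ : ℝ) :
    Measurable (sphericalLogNormalRadial μ σ) := by
  unfold sphericalLogNormalRadial
  fun_prop

theorem exp_pow_three_mul_sphericalLogNormalRadial_exp {μ σ : ℝ} (hσ : 0 < σ) (t : ℝ) :
    exp t ^ 3 * sphericalLogNormalRadial μ σ (exp t) =
      (4 * π)⁻¹ * gaussianPDFReal μ (σ ^ 2).toNNReal t := by
  have hsqrt : √(2 * π * (σ ^ 2).toNNReal) = σ * (2 * π) ^ ((1 : ℝ) / 2) := by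
    rw [Real.coe_toNNReal _ (by positivity), ← sqrt_eq_rpow, mul_comm σ,
      ← sqrt_sq hσ.le, ← sqrt_mul (by positivity), sqrt_sq hσ.le]
  have hpow : (2 * π) ^ ((3 : ℝ) / 2) = (2 * π) * (2 * π) ^ ((1 : ℝ) / 2) := by
    rw [show (3 : ℝ) / 2 = 1 + 1 / 2 by norm_num, rpow_add (by positivity), rpow_one]
  rw [sphericalLogNormalRadial, gaussianPDFReal, hsqrt, hpow, log_exp,
    Real.coe_toNNReal _ (by positivity)]
  field_simp
  ring

theorem lintegral_sphericalLogNormalRadial {μ σ : ℝ} (hσ : 0 < σ) :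
    ∫⁻ r, ENNReal.ofReal (sphericalLogNormalRadial μ σ r) ∂Measure.volumeIoiPow 2 =
      ENNReal.ofReal (4 * π)⁻¹ := by
  have hσ2 : (σ ^ 2).toNNReal ≠ 0 := by simp [hσ.ne']
  rw [Measure.lintegral_volumeIoiPow 2 (measurable_sphericalLogNormalRadial μ σ).ennreal_ofReal,
    lintegral_Ioi_zero_eq_lintegral_comp_exp]
  calc ∫⁻ t, ENNReal.ofReal (exp t) * (ENNReal.ofReal (exp t ^ 2) *
        ENNReal.ofReal (sphericalLogNormalRadial μ σ (exp t)))
      = ∫⁻ t, ENNReal.ofReal (4 * π)⁻¹ * gaussianPDF μ (σ ^ 2).toNNReal t := by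
        refine lintegral_congr fun t => ?_
        rw [gaussianPDF, ← ENNReal.ofReal_mul (by positivity), ← ENNReal.ofReal_mul (by positivity),
          ← mul_assoc, ← pow_succ', exp_pow_three_mul_sphericalLogNormalRadial_exp hσ,
          ENNReal.ofReal_mul (by positivity)]
    _ = ENNReal.ofReal (4 * π)⁻¹ := by
        rw [lintegral_const_mul _ (measurable_gaussianPDF _ _), lintegral_gaussianPDF_eq_one _ hσ2,
          mul_one]

theorem volume_toSphere_univ_euclideanSpace_fin_three :
    (volume : Measure (EuclideanSpace ℝ (Fin 3))).toSphere univ = ENNReal.ofReal (4 * π) := by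
  rw [Measure.toSphere_apply_univ, finrank_euclideanSpace_fin,
    EuclideanSpace.volume_ball_fin_three, ENNReal.ofReal_one, one_pow, one_mul,
    ← ENNReal.ofReal_natCast, ← ENNReal.ofReal_mul (by norm_num)]
  congr 1
  ring

theorem sphericalLogNormalDensity_of_ne_zero (μ σ : ℝ) {x : EuclideanSpace ℝ (Fin 3)} (hx : x ≠ 0) :
    sphericalLogNormalDensity μ σ x = sphericalLogNormalRadial μ σ ‖x‖ :=
  if_neg hx

/-- The pushforward of the Spherical Log-Normal distribution under `x ↦ x/‖x‖`
is the uniform probability measure on the unit sphere of ℝ³ (here both sides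
are regarded as measures on ℝ³, the right hand side being supported on the
sphere). -/
theorem map_normalize_sphericalLogNormal_eq_uniformSphere (μ σ : ℝ) (hσ : 0 < σ) :
    Measure.map (fun x : EuclideanSpace ℝ (Fin 3) => ‖x‖⁻¹ • x)
        (volume.withDensity fun x => ENNReal.ofReal (sphericalLogNormalDensity μ σ x)) =
      Measure.map (Subtype.val) uniformSphereMeasure := by
  have hdensity : (fun x => ENNReal.ofReal (sphericalLogNormalDensity μ σ x)) =ᵐ[volume]
      fun x => ENNReal.ofReal (sphericalLogNormalRadial μ σ ‖x‖) := by
    filter_upwards [compl_mem_ae_iff.mpr (measure_singleton 0)] with x hx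
    rw [sphericalLogNormalDensity_of_ne_zero μ σ hx]
  rw [withDensity_congr_ae hdensity,
    map_normalize_withDensity_norm volume (measurable_sphericalLogNormalRadial μ σ).ennreal_ofReal,
    finrank_euclideanSpace_fin, lintegral_sphericalLogNormalRadial hσ, uniformSphereMeasure,
    Measure.map_smul, volume_toSphere_univ_euclideanSpace_fin_three,
    ENNReal.ofReal_inv_of_pos (by positivity)]
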